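/- arXiv:1604.02180 — 6 statements merged into one kernel-verified Lean document; each statement's English description precedes it below -/
import Mathlib

section
/- Let R be a finite index set and let (Y_r)_{r∈R} be mutually independent real-valued random variables on a common probability space such that 0 ≤ Y_r ≤ b almost surely for every r ∈ R, where b > 0 is a constant, and suppose E[∑_{r∈R} Y_r] ≥ b. Then P( ∑_{r∈R} Y_r ≤ (1/3)·E[∑_{r∈R} Y_r] ) ≤ exp(−2/9). -/
/-!
Chernoff's method with the parameter `t = -1/b`. By convexity of `exp`, a variable `X` with values
in `[0, b]` satisfies `exp (t X) ≤ 1 + (X / b) (exp (t b) - 1)`, hence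
`E[exp (t X)] ≤ exp ((exp (t b) - 1) / b · E[X])`. Independence multiplies these bounds, so with
`m = E[∑ Y]` Markov's inequality gives `P(∑ Y ≤ m / 3) ≤ exp ((m / b) (e⁻¹ - 2/3))`, and
`e⁻¹ - 2/3 < -2/9` together with `m / b ≥ 1` finishes the proof.
-/

open MeasureTheory ProbabilityTheory

open Real

lemma Real.exp_mul_le_one_add_div_mul {s y b : ℝ} (hb : 0 < b) (hy : y ∈ Set.Icc 0 b) :
    exp (s * y) ≤ 1 + y / b * (exp (s * b) - 1) := by
  have hθ₀ : 0 ≤ y / b := div_nonneg hy.1 hb.le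
  have hθ₁ : 0 ≤ 1 - y / b := by rw [sub_nonneg, div_le_one hb]; exact hy.2
  have hchord := convexOn_exp.2 (Set.mem_univ 0) (Set.mem_univ (s * b)) hθ₁ hθ₀ (by ring)
  have hpoint : (1 - y / b) • (0 : ℝ) + (y / b) • (s * b) = s * y := by
    simp only [smul_eq_mul]; field_simp; ring
  rw [hpoint] at hchord
  simp only [smul_eq_mul, exp_zero] at hchord
  linarith

namespace ProbabilityTheory

variable {Ω : Type*} [MeasurableSpace Ω] {μ : Measure Ω} [IsProbabilityMeasure μ] {b : ℝ}

lemma mgf_le_exp_mul_integral_of_mem_Icc {X : Ω → ℝ} (hb : 0 < b) (hX : AEMeasurable X μ)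
    (hbdd : ∀ᵐ ω ∂μ, X ω ∈ Set.Icc 0 b) (t : ℝ) :
    mgf X μ t ≤ exp ((exp (t * b) - 1) / b * μ[X]) := by
  have hXint : Integrable X μ := .of_mem_Icc 0 b hX hbdd
  have hchord : mgf X μ t ≤ ∫ ω, (1 + (exp (t * b) - 1) / b * X ω) ∂μ := by
    refine integral_mono_ae (integrable_exp_mul_of_mem_Icc hX hbdd)
      ((integrable_const 1).add (hXint.const_mul _)) ?_
    filter_upwards [hbdd] with ω hω
    calc exp (t * X ω) ≤ 1 + X ω / b * (exp (t * b) - 1) := exp_mul_le_one_add_div_mul hb hω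
      _ = 1 + (exp (t * b) - 1) / b * X ω := by ring
  rw [integral_add (integrable_const 1) (hXint.const_mul _), integral_const_mul] at hchord
  simp only [integral_const, probReal_univ, smul_eq_mul, one_mul] at hchord
  exact hchord.trans (by linarith [add_one_le_exp ((exp (t * b) - 1) / b * μ[X])])

variable {ι : Type*} [Fintype ι] {X : ι → Ω → ℝ}

lemma iIndepFun.mgf_sum_le_exp_mul_integral (hindep : iIndepFun X μ) (hb : 0 < b)
    (hX : ∀ i, AEMeasurable (X i) μ) (hbdd : ∀ i, ∀ᵐ ω ∂μ, X i ω ∈ Set.Icc 0 b) (t : ℝ) :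
    mgf (fun ω ↦ ∑ i, X i ω) μ t ≤ exp ((exp (t * b) - 1) / b * ∫ ω, ∑ i, X i ω ∂μ) := by
  have hXint i : Integrable (X i) μ := .of_mem_Icc 0 b (hX i) (hbdd i)
  rw [← Finset.sum_fn, hindep.mgf_sum₀ hX, Finset.sum_fn, integral_finsetSum _ fun i _ ↦ hXint i,
    Finset.mul_sum, exp_sum]
  exact Finset.prod_le_prod (fun i _ ↦ mgf_nonneg)
    fun i _ ↦ mgf_le_exp_mul_integral_of_mem_Icc hb (hX i) (hbdd i) t

lemma iIndepFun.measureReal_sum_le_le_exp (hindep : iIndepFun X μ) (hb : 0 < b)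
    (hX : ∀ i, AEMeasurable (X i) μ) (hbdd : ∀ i, ∀ᵐ ω ∂μ, X i ω ∈ Set.Icc 0 b)
    {t : ℝ} (ht : t ≤ 0) (a : ℝ) :
    μ.real {ω | ∑ i, X i ω ≤ a} ≤
      exp (-t * a + (exp (t * b) - 1) / b * ∫ ω, ∑ i, X i ω ∂μ) := by
  have hsum_bdd : ∀ᵐ ω ∂μ, ∑ i, X i ω ∈ Set.Icc 0 (∑ _i : ι, b) := by
    filter_upwards [ae_all_iff.2 hbdd] with ω hω
    exact ⟨Finset.sum_nonneg fun i _ ↦ (hω i).1, Finset.sum_le_sum fun i _ ↦ (hω i).2⟩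
  have hint := integrable_exp_mul_of_mem_Icc (t := t)
    (Finset.aemeasurable_fun_sum Finset.univ fun i _ ↦ hX i) hsum_bdd
  calc μ.real {ω | ∑ i, X i ω ≤ a} ≤ exp (-t * a) * mgf (fun ω ↦ ∑ i, X i ω) μ t :=
        measure_le_le_exp_mul_mgf a ht hint
    _ ≤ exp (-t * a) * exp ((exp (t * b) - 1) / b * ∫ ω, ∑ i, X i ω ∂μ) := by
        gcongr; exact hindep.mgf_sum_le_exp_mul_integral hb hX hbdd t
    _ = _ := (exp_add _ _).symm

end ProbabilityTheory

/-- Chernoff-type profit guarantee: if the independent profits `Y r` are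
bounded in `[0, b]` and the expected total profit is at least `b`, then the
probability of achieving at most a third of the expected profit is at most
`exp (-2/9)`. -/
theorem profit_bound {Ω : Type*} [MeasurableSpace Ω] (μ : Measure Ω) [IsProbabilityMeasure μ]
    {R : Type*} [Fintype R] (Y : R → Ω → ℝ) (b : ℝ)
    (hmeas : ∀ r, Measurable (Y r))
    (hindep : iIndepFun Y μ)
    (hb : 0 < b)
    (hbdd : ∀ r, ∀ᵐ ω ∂μ, 0 ≤ Y r ω ∧ Y r ω ≤ b)
    (hE : b ≤ ∫ ω, ∑ r, Y r ω ∂μ) :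
    μ {ω | ∑ r, Y r ω ≤ (1 / 3) * ∫ ω', ∑ r, Y r ω' ∂μ}
      ≤ ENNReal.ofReal (Real.exp (-2 / 9)) := by
  set m := ∫ ω, ∑ r, Y r ω ∂μ
  have htail := hindep.measureReal_sum_le_le_exp hb (fun r ↦ (hmeas r).aemeasurable) hbdd
    (t := -1 / b) (by rw [neg_div]; exact neg_nonpos.2 (one_div_pos.2 hb).le) ((1 / 3) * m)
  have hexponent : -(-1 / b) * ((1 / 3) * m) + (exp (-1 / b * b) - 1) / b * m ≤ -2 / 9 := by
    have hmb : 1 ≤ m / b := (one_le_div hb).2 hE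
    have hsplit : -(-1 / b) * ((1 / 3) * m) + (exp (-1 / b * b) - 1) / b * m
        = m / b * (exp (-1) - 2 / 3) := by
      rw [div_mul_cancel₀ _ hb.ne']; ring
    rw [hsplit]
    nlinarith [exp_neg_one_lt_d9]
  rw [← ofReal_measureReal]
  exact ENNReal.ofReal_le_ofReal (htail.trans (exp_le_exp.2 hexponent))
end

section
/- Let R be a finite index set and let (L_r)_{r∈R} be mutually independent nonnegative real-valued random variables on a common probability space with 0 ≤ L_r ≤ M_r almost surely for constants M_r ≥ 0. Let d > 0 and let m_r be constants with 0 < m_r ≤ d for every r ∈ R, and suppose E[∑_{r∈R} L_r] ≤ d. Set Δ := ∑_{r∈R} (M_r / m_r)². Then for every real N ≥ 1, P( ∑_{r∈R} L_r ≥ (1 + √(2·(log N)·Δ))·d ) ≤ N^{−4}. -/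
/-!
Hoeffding's inequality for the independent loads `L r ∈ [0, M r]` bounds the probability that
`∑ L r` exceeds its mean (at most `d`) by `ε d` by `exp (-2 ε² d² / ∑ M r²)`. Since `m r ≤ d`,
`∑ M r² ≤ Δ d²`, so the bound is at most `exp (-2 ε² / Δ)`, which is `N⁻⁴` for
`ε = √(2 log N · Δ)`.
-/

open MeasureTheory ProbabilityTheory

lemma measureReal_sum_integral_add_le_sum_le {Ω ι : Type*} [MeasurableSpace Ω] {μ : Measure Ω}
    [IsProbabilityMeasure μ] [Fintype ι] {X : ι → Ω → ℝ} {a b : ι → ℝ}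
    (hX : ∀ i, AEMeasurable (X i) μ) (hindep : iIndepFun X μ)
    (hab : ∀ i, ∀ᵐ ω ∂μ, X i ω ∈ Set.Icc (a i) (b i)) {ε : ℝ} (hε : 0 ≤ ε) :
    μ.real {ω | ∑ i, ∫ x, X i x ∂μ + ε ≤ ∑ i, X i ω} ≤
      Real.exp (-(2 * ε ^ 2 / ∑ i, (b i - a i) ^ 2)) := by
  have hcentered : iIndepFun (fun i ω ↦ X i ω - ∫ x, X i x ∂μ) μ :=
    hindep.comp (fun i (y : ℝ) ↦ y - ∫ x, X i x ∂μ) fun _ ↦ measurable_id.sub_const _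
  have hoeffding := HasSubgaussianMGF.measure_sum_ge_le_of_iIndepFun hcentered
    (s := Finset.univ) (fun i _ ↦ hasSubgaussianMGF_of_mem_Icc (hX i) (hab i)) hε
  have hevent : {ω | ∑ i, ∫ x, X i x ∂μ + ε ≤ ∑ i, X i ω} =
      {ω | ε ≤ ∑ i, (X i ω - ∫ x, X i x ∂μ)} := by
    ext ω
    simp only [Set.mem_ofPred_eq, Finset.sum_sub_distrib, le_sub_iff_add_le']
  have hparam :
      (2 * ∑ i, ((‖b i - a i‖₊ / 2) ^ 2 : NNReal) : ℝ) = (∑ i, (b i - a i) ^ 2) / 2 := by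
    push_cast
    simp only [Real.norm_eq_abs, div_pow, sq_abs, ← Finset.sum_div]
    ring
  rw [hevent]
  convert hoeffding using 2
  rw [hparam]
  ring

lemma measure_le_sum_eq_zero_of_sum_lt {Ω ι : Type*} [MeasurableSpace Ω] {μ : Measure Ω}
    [Fintype ι] {X : ι → Ω → ℝ} {b : ι → ℝ} (hb : ∀ i, ∀ᵐ ω ∂μ, X i ω ≤ b i) {c : ℝ}
    (hc : ∑ i, b i < c) :
    μ {ω | c ≤ ∑ i, X i ω} = 0 := by
  refine measure_eq_zero_iff_ae_notMem.mpr ((ae_all_iff.mpr hb).mono fun ω hω ↦ ?_)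
  simpa only [Set.mem_ofPred_eq, not_le] using
    (Finset.sum_le_sum fun i _ ↦ hω i).trans_lt hc

lemma sum_sq_le_sum_div_sq_mul_sq {ι : Type*} (s : Finset ι) (M : ι → ℝ) {m : ι → ℝ} {d : ℝ}
    (hm : ∀ i ∈ s, 0 < m i ∧ m i ≤ d) :
    ∑ i ∈ s, M i ^ 2 ≤ (∑ i ∈ s, (M i / m i) ^ 2) * d ^ 2 := by
  rw [Finset.sum_mul]
  refine Finset.sum_le_sum fun i hi ↦ ?_
  obtain ⟨hm_pos, hm_le⟩ := hm i hi
  calc M i ^ 2 = (M i / m i) ^ 2 * m i ^ 2 := by field_simp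
    _ ≤ (M i / m i) ^ 2 * d ^ 2 := by gcongr

lemma exp_neg_two_mul_sq_sqrt_mul_div_eq_rpow {N Δ d : ℝ} (hN : 1 ≤ N) (hΔ : 0 < Δ)
    (hd : d ≠ 0) :
    Real.exp (-(2 * (Real.sqrt (2 * Real.log N * Δ) * d) ^ 2 / (Δ * d ^ 2))) = N ^ (-4 : ℝ) := by
  have hlog : 0 ≤ Real.log N := Real.log_nonneg hN
  rw [Real.rpow_def_of_pos (by linarith), mul_pow, Real.sq_sqrt (by positivity)]
  congr 1
  field_simp
  ring

theorem node_capacity_violation_general {Ω : Type*} [MeasurableSpace Ω] (μ : Measure Ω)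
    [IsProbabilityMeasure μ]
    {R : Type*} [Fintype R] (L : R → Ω → ℝ) (M m : R → ℝ) (d : ℝ)
    (hmeas : ∀ r, Measurable (L r))
    (hindep : iIndepFun L μ)
    (hbdd : ∀ r, ∀ᵐ ω ∂μ, 0 ≤ L r ω ∧ L r ω ≤ M r)
    (hd : 0 < d)
    (hm : ∀ r, 0 < m r ∧ m r ≤ d)
    (hE : ∫ ω, ∑ r, L r ω ∂μ ≤ d) :
    ∀ N : ℝ, 1 ≤ N →
      μ {ω | (1 + Real.sqrt (2 * Real.log N * ∑ r, (M r / m r) ^ 2)) * d ≤ ∑ r, L r ω}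
        ≤ ENNReal.ofReal (N ^ (-4 : ℝ)) := by
  intro N hN
  set Δ := ∑ r, (M r / m r) ^ 2
  set ε := Real.sqrt (2 * Real.log N * Δ)
  have hM2 : ∑ r, M r ^ 2 ≤ Δ * d ^ 2 :=
    sum_sq_le_sum_div_sq_mul_sq _ M fun r _ ↦ hm r
  -- The Hoeffding exponent divides by `∑ M r ^ 2`, so its vanishing is treated apart.
  rcases (Finset.sum_nonneg fun r _ ↦ sq_nonneg (M r)).eq_or_lt with hM0 | hMpos
  · have hM_zero : ∀ r, M r = 0 := by
      simpa [funext_iff] using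
        (Fintype.sum_eq_zero_iff_of_nonneg fun r ↦ sq_nonneg (M r)).mp hM0.symm
    rw [measure_le_sum_eq_zero_of_sum_lt (fun r ↦ (hbdd r).mono fun ω h ↦ h.2)
      (by simpa [hM_zero] using mul_pos (by positivity) hd)]
    exact zero_le
  have hΔ : 0 < Δ := pos_of_mul_pos_left (hMpos.trans_le hM2) (sq_nonneg d)
  have hmean : ∑ r, ∫ x, L r x ∂μ ≤ d := by
    rwa [← integral_finsetSum _ fun r _ ↦
      Integrable.of_mem_Icc 0 (M r) (hmeas r).aemeasurable (hbdd r)]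
  rw [ENNReal.le_ofReal_iff_toReal_le (measure_ne_top _ _) (by positivity), ← measureReal_def]
  calc μ.real {ω | (1 + ε) * d ≤ ∑ r, L r ω}
      ≤ μ.real {ω | ∑ r, ∫ x, L r x ∂μ + ε * d ≤ ∑ r, L r ω} :=
        measureReal_mono fun ω hω ↦ by simp only [Set.mem_ofPred_eq] at hω ⊢; linarith
    _ ≤ Real.exp (-(2 * (ε * d) ^ 2 / ∑ r, (M r - 0) ^ 2)) :=
        measureReal_sum_integral_add_le_sum_le (fun r ↦ (hmeas r).aemeasurable) hindep hbdd
          (by positivity)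
    _ ≤ Real.exp (-(2 * (ε * d) ^ 2 / (Δ * d ^ 2))) := by
        simp only [sub_zero]
        gcongr
    _ = N ^ (-4 : ℝ) := exp_neg_two_mul_sq_sqrt_mul_div_eq_rpow hN hΔ hd.ne'

/-- Node capacity violation bound: independent loads `L r ∈ [0, M r]`, single-demand
bounds `m r ≤ d`, expected total load at most the capacity `d`.  With
`Δ = ∑ (M r / m r)²`, the probability that the total load exceeds
`(1 + √(2 (log N) Δ)) d` is at most `N⁻⁴`. -/
theorem node_capacity_violation {Ω : Type*} [MeasurableSpace Ω] (μ : Measure Ω)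
    [IsProbabilityMeasure μ]
    {R : Type*} [Fintype R] (L : R → Ω → ℝ) (M m : R → ℝ) (d : ℝ)
    (hmeas : ∀ r, Measurable (L r))
    (hindep : iIndepFun L μ)
    (hM : ∀ r, 0 ≤ M r)
    (hbdd : ∀ r, ∀ᵐ ω ∂μ, 0 ≤ L r ω ∧ L r ω ≤ M r)
    (hd : 0 < d)
    (hm : ∀ r, 0 < m r ∧ m r ≤ d)
    (hE : ∫ ω, ∑ r, L r ω ∂μ ≤ d) :
    ∀ N : ℝ, 1 ≤ N →
      μ {ω | (1 + Real.sqrt (2 * Real.log N * ∑ r, (M r / m r) ^ 2)) * d ≤ ∑ r, L r ω}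
        ≤ ENNReal.ofReal (N ^ (-4 : ℝ)) :=
  node_capacity_violation_general μ L M m d hmeas hindep hbdd hd hm hE
end

section
/- Let R be a finite index set and let (L_r)_{r∈R} be mutually independent nonnegative real-valued random variables on a common probability space with 0 ≤ L_r ≤ M_r almost surely for constants M_r ≥ 0. Let d > 0, let 0 < ε < 1, and let m_r be constants with 0 < m_r ≤ ε·d for every r ∈ R, and suppose E[∑_{r∈R} L_r] ≤ d. Set Δ := ∑_{r∈R} (M_r / m_r)². Then for every real N ≥ 1, P( ∑_{r∈R} L_r ≥ (1 + ε·√(2·(log N)·Δ))·d ) ≤ N^{−4}. -/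
/-! Hoeffding's inequality for the independent loads `L r ∈ [0, M r]`, applied at distance
`t = ε √(2 log N Δ) d` above the mean `∑ E[L r] ≤ d`, gives the tail bound
`exp (-2 t² / ∑ M r ²)`. Since `M r = (M r / m r) m r ≤ (M r / m r) ε d`, the variance proxy
satisfies `∑ M r ² ≤ ε² d² Δ`, so the exponent is at most `-4 log N`. -/

open MeasureTheory ProbabilityTheory Real

section SumOfIndependent

variable {Ω ι : Type*} [MeasurableSpace Ω] {μ : Measure Ω} [Fintype ι] {X : ι → Ω → ℝ}

theorem measureReal_sum_ge_le_of_iIndepFun_of_mem_Icc [IsProbabilityMeasure μ] {a b : ι → ℝ}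
    (hindep : iIndepFun X μ) (hmeas : ∀ i, AEMeasurable (X i) μ)
    (hbdd : ∀ i, ∀ᵐ ω ∂μ, X i ω ∈ Set.Icc (a i) (b i)) {t : ℝ} (ht : 0 ≤ t) :
    μ.real {ω | ∑ i, μ[X i] + t ≤ ∑ i, X i ω} ≤
      exp (-2 * t ^ 2 / ∑ i, (b i - a i) ^ 2) := by
  have hcentered := hindep.comp (fun i (y : ℝ) ↦ y - μ[X i]) fun _ ↦ measurable_sub_const _
  have hproxy :
      2 * ((∑ i, (‖b i - a i‖₊ / 2) ^ 2 : NNReal) : ℝ) = (∑ i, (b i - a i) ^ 2) / 2 := by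
    push_cast
    simp only [norm_eq_abs, div_pow, sq_abs, ← Finset.sum_div]
    ring
  calc μ.real {ω | ∑ i, μ[X i] + t ≤ ∑ i, X i ω}
      = μ.real {ω | t ≤ ∑ i, (X i ω - μ[X i])} := by
        congr 1
        ext ω
        simp only [Set.mem_ofPred_eq, Finset.sum_sub_distrib]
        constructor <;> intro h <;> linarith
    _ ≤ exp (-t ^ 2 / (2 * ((∑ i, (‖b i - a i‖₊ / 2) ^ 2 : NNReal) : ℝ))) :=
        HasSubgaussianMGF.measure_sum_ge_le_of_iIndepFun (s := Finset.univ) hcentered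
          (fun i _ ↦ hasSubgaussianMGF_of_mem_Icc (hmeas i) (hbdd i)) ht
    _ = exp (-2 * t ^ 2 / ∑ i, (b i - a i) ^ 2) := by rw [hproxy]; ring_nf

theorem measure_le_sum_eq_zero_of_ae_nonpos (hX : ∀ i, ∀ᵐ ω ∂μ, X i ω ≤ 0) {c : ℝ}
    (hc : 0 < c) : μ {ω | c ≤ ∑ i, X i ω} = 0 := by
  rw [measure_eq_zero_iff_ae_notMem]
  filter_upwards [ae_all_iff.2 hX] with ω hω
  simpa using (Finset.sum_nonpos fun i _ ↦ hω i).trans_lt hc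

end SumOfIndependent

theorem sum_sq_le_sq_mul_sum_div_sq {ι : Type*} [Fintype ι] {M m : ι → ℝ} {s : ℝ}
    (hm : ∀ i, 0 < m i ∧ m i ≤ s) : ∑ i, M i ^ 2 ≤ s ^ 2 * ∑ i, (M i / m i) ^ 2 := by
  rw [Finset.mul_sum]
  refine Finset.sum_le_sum fun i _ ↦ ?_
  obtain ⟨hm0, hms⟩ := hm i
  calc M i ^ 2 = (M i / m i) ^ 2 * m i ^ 2 := by field_simp
    _ ≤ (M i / m i) ^ 2 * s ^ 2 := by gcongr
    _ = s ^ 2 * (M i / m i) ^ 2 := mul_comm _ _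

theorem exp_neg_two_mul_sq_div_le_rpow_neg_four {N V Δ s : ℝ} (hN : 1 ≤ N) (hV : 0 < V)
    (hVΔ : V ≤ s ^ 2 * Δ) :
    exp (-2 * (s * √(2 * log N * Δ)) ^ 2 / V) ≤ N ^ (-4 : ℝ) := by
  have hΔ : 0 ≤ Δ := (pos_of_mul_pos_right (hV.trans_le hVΔ) (sq_nonneg s)).le
  rw [rpow_def_of_pos (by linarith), exp_le_exp, mul_pow, sq_sqrt (by positivity [log_nonneg hN]),
    div_le_iff₀ hV]
  nlinarith [mul_le_mul_of_nonneg_left hVΔ (log_nonneg hN)]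

theorem node_capacity_violation_eps_general {Ω : Type*} [MeasurableSpace Ω] (μ : Measure Ω)
    [IsProbabilityMeasure μ]
    {R : Type*} [Fintype R] (L : R → Ω → ℝ) (M m : R → ℝ) (d ε : ℝ)
    (hmeas : ∀ r, Measurable (L r))
    (hindep : iIndepFun L μ)
    (hbdd : ∀ r, ∀ᵐ ω ∂μ, 0 ≤ L r ω ∧ L r ω ≤ M r)
    (hd : 0 < d)
    (hε0 : 0 < ε)
    (hm : ∀ r, 0 < m r ∧ m r ≤ ε * d)
    (hE : ∫ ω, ∑ r, L r ω ∂μ ≤ d) :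
    ∀ N : ℝ, 1 ≤ N →
      μ {ω | (1 + ε * Real.sqrt (2 * Real.log N * ∑ r, (M r / m r) ^ 2)) * d ≤ ∑ r, L r ω}
        ≤ ENNReal.ofReal (N ^ (-4 : ℝ)) := by
  intro N hN
  have hmean : ∑ r, μ[L r] ≤ d := by
    rwa [← integral_finsetSum _ fun r _ ↦
      Integrable.of_mem_Icc 0 (M r) (hmeas r).aemeasurable (hbdd r)]
  set t := ε * d * √(2 * log N * ∑ r, (M r / m r) ^ 2)
  -- if `∑ M r ^ 2 = 0` the Hoeffding bound reads `exp 0 = 1`, so the loads vanish instead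
  rcases (Finset.sum_nonneg fun r _ ↦ sq_nonneg (M r)).eq_or_lt with hV | hV
  · have hM : ∀ r, M r = 0 := fun r ↦ pow_eq_zero_iff two_ne_zero |>.1 <|
      (Finset.sum_eq_zero_iff_of_nonneg fun r _ ↦ sq_nonneg (M r)).1 hV.symm r (Finset.mem_univ r)
    rw [measure_le_sum_eq_zero_of_ae_nonpos (fun r ↦ (hbdd r).mono fun ω h ↦ hM r ▸ h.2)
      (by positivity)]
    exact zero_le
  calc μ {ω | (1 + ε * √(2 * log N * ∑ r, (M r / m r) ^ 2)) * d ≤ ∑ r, L r ω}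
      ≤ μ {ω | ∑ r, μ[L r] + t ≤ ∑ r, L r ω} :=
        measure_mono fun ω (hω : _ * d ≤ _) ↦ show _ + t ≤ _ by linarith
    _ = ENNReal.ofReal (μ.real {ω | ∑ r, μ[L r] + t ≤ ∑ r, L r ω}) :=
        (ofReal_measureReal (measure_ne_top _ _)).symm
    _ ≤ ENNReal.ofReal (exp (-2 * t ^ 2 / ∑ r, M r ^ 2)) := ENNReal.ofReal_le_ofReal <| by
        simpa only [sub_zero] using measureReal_sum_ge_le_of_iIndepFun_of_mem_Icc hindep
          (fun r ↦ (hmeas r).aemeasurable) hbdd (by positivity)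
    _ ≤ ENNReal.ofReal (N ^ (-4 : ℝ)) := ENNReal.ofReal_le_ofReal <|
        exp_neg_two_mul_sq_div_le_rpow_neg_four hN hV (sum_sq_le_sq_mul_sum_div_sq hm)

/-- Sharpened node capacity violation bound under the stronger demand assumption
`m r ≤ ε * d` with `0 < ε < 1`: the probability of exceeding
`(1 + ε √(2 (log N) Δ)) d` is at most `N⁻⁴`. -/
theorem node_capacity_violation_eps {Ω : Type*} [MeasurableSpace Ω] (μ : Measure Ω)
    [IsProbabilityMeasure μ]
    {R : Type*} [Fintype R] (L : R → Ω → ℝ) (M m : R → ℝ) (d ε : ℝ)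
    (hmeas : ∀ r, Measurable (L r))
    (hindep : iIndepFun L μ)
    (hM : ∀ r, 0 ≤ M r)
    (hbdd : ∀ r, ∀ᵐ ω ∂μ, 0 ≤ L r ω ∧ L r ω ≤ M r)
    (hd : 0 < d)
    (hε0 : 0 < ε) (hε1 : ε < 1)
    (hm : ∀ r, 0 < m r ∧ m r ≤ ε * d)
    (hE : ∫ ω, ∑ r, L r ω ∂μ ≤ d) :
    ∀ N : ℝ, 1 ≤ N →
      μ {ω | (1 + ε * Real.sqrt (2 * Real.log N * ∑ r, (M r / m r) ^ 2)) * d ≤ ∑ r, L r ω}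
        ≤ ENNReal.ofReal (N ^ (-4 : ℝ)) :=
  node_capacity_violation_eps_general μ L M m d ε hmeas hindep hbdd hd hε0 hm hE
end

section
/- Let R be a finite index set and let (L_r)_{r∈R} be mutually independent nonnegative real-valued random variables on a common probability space with 0 ≤ L_r ≤ m_r·n_r almost surely, where n_r are natural numbers, 0 < ε < 1, and m_r are constants with 0 < m_r ≤ ε·d for a constant d > 0. Suppose E[∑_{r∈R} L_r] ≤ d and set Δ_E := ∑_{r∈R} n_r². Then for every real n ≥ 1, P( ∑_{r∈R} L_r ≥ (1 + ε·√(2·(log n)·Δ_E))·d ) ≤ n^{−4}. -/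
/-!
The load `∑ r, L r` is a sum of independent variables with `L r ∈ [0, m r * nE r]`, so Hoeffding's
inequality bounds the probability that it exceeds its mean by `t` by
`exp (-2 t² / ∑ r, (m r * nE r)²)`. The mean is at most `d`, and `m r ≤ ε d` gives
`∑ r, (m r * nE r)² ≤ ε² d² Δ_E`, so for `t = ε d √(2 log n Δ_E)` the exponent is at most `-4 log n`.
If every `m r * nE r` vanishes, the load is `0` almost surely and never reaches `d`.
-/

open MeasureTheory ProbabilityTheory Real

theorem sum_mul_sq_le_sq_mul_sum_sq {ι : Type*} {s : Finset ι} {f g : ι → ℝ} {c : ℝ}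
    (hf0 : ∀ i ∈ s, 0 ≤ f i) (hfc : ∀ i ∈ s, f i ≤ c) :
    ∑ i ∈ s, (f i * g i) ^ 2 ≤ c ^ 2 * ∑ i ∈ s, g i ^ 2 := by
  rw [Finset.mul_sum]
  refine Finset.sum_le_sum fun i hi ↦ ?_
  rw [mul_pow]
  gcongr
  exacts [hf0 i hi, hfc i hi]

section

variable {Ω ι : Type*} [MeasurableSpace Ω] {μ : Measure Ω} [Fintype ι] {X : ι → Ω → ℝ}

theorem measure_sum_sub_integral_ge_le_of_mem_Icc {a b : ι → ℝ}
    (hmeas : ∀ i, AEMeasurable (X i) μ) (hindep : iIndepFun X μ)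
    (hX : ∀ i, ∀ᵐ ω ∂μ, X i ω ∈ Set.Icc (a i) (b i)) {t : ℝ} (ht : 0 ≤ t) :
    μ {ω | t ≤ ∑ i, (X i ω - μ[X i])}
      ≤ ENNReal.ofReal (exp (-2 * t ^ 2 / ∑ i, (b i - a i) ^ 2)) := by
  have := hindep.isProbabilityMeasure
  have hcentered : iIndepFun (fun i ω ↦ X i ω - μ[X i]) μ :=
    hindep.comp (fun i (x : ℝ) ↦ x - ∫ ω, X i ω ∂μ) fun i ↦ measurable_id.sub_const _
  have h := HasSubgaussianMGF.measure_sum_ge_le_of_iIndepFun hcentered (s := Finset.univ)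
    (fun i _ ↦ hasSubgaussianMGF_of_mem_Icc (hmeas i) (hX i)) ht
  rw [ENNReal.le_ofReal_iff_toReal_le (measure_ne_top _ _) (exp_pos _).le, ← measureReal_def]
  refine h.trans_eq (congrArg exp ?_)
  push_cast
  simp only [Real.norm_eq_abs, div_pow, sq_abs, ← Finset.sum_div]
  ring

theorem measure_le_sum_eq_zero_of_sum_sq_eq_zero {b : ι → ℝ} (hX : ∀ i, ∀ᵐ ω ∂μ, X i ω ≤ b i)
    (hb : ∑ i, b i ^ 2 = 0) {s : ℝ} (hs : 0 < s) : μ {ω | s ≤ ∑ i, X i ω} = 0 := by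
  have hb0 (i : ι) : b i = 0 := by
    simpa using congrFun ((Fintype.sum_eq_zero_iff_of_nonneg fun i ↦ sq_nonneg (b i)).1 hb) i
  rw [measure_eq_zero_iff_ae_notMem]
  filter_upwards [ae_all_iff.2 hX] with ω hω
  have hsum : ∑ i, X i ω ≤ 0 := Fintype.sum_nonpos fun i ↦ (hω i).trans_eq (hb0 i)
  simp only [not_le]
  linarith

end

theorem edge_capacity_violation_eps_general {Ω : Type*} [MeasurableSpace Ω] (μ : Measure Ω)
    [IsProbabilityMeasure μ]
    {R : Type*} [Fintype R] (L : R → Ω → ℝ) (m : R → ℝ) (nE : R → ℕ) (d ε : ℝ)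
    (hmeas : ∀ r, Measurable (L r))
    (hindep : iIndepFun L μ)
    (hbdd : ∀ r, ∀ᵐ ω ∂μ, 0 ≤ L r ω ∧ L r ω ≤ m r * (nE r : ℝ))
    (hd : 0 < d)
    (hε0 : 0 < ε)
    (hm : ∀ r, 0 < m r ∧ m r ≤ ε * d)
    (hE : ∫ ω, ∑ r, L r ω ∂μ ≤ d) :
    ∀ n : ℝ, 1 ≤ n →
      μ {ω | (1 + ε * Real.sqrt (2 * Real.log n * ∑ r, ((nE r : ℝ)) ^ 2)) * d ≤ ∑ r, L r ω}
        ≤ ENNReal.ofReal (n ^ (-4 : ℝ)) := by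
  intro n hn
  set Δ : ℝ := ∑ r, (nE r : ℝ) ^ 2
  set t := ε * d * √(2 * log n * Δ)
  set C := ∑ r, (m r * nE r) ^ 2
  have hthreshold : (1 + ε * √(2 * log n * Δ)) * d = d + t := by ring
  rcases (Finset.sum_nonneg fun r _ ↦ sq_nonneg (m r * nE r) : 0 ≤ C).eq_or_lt with hC | hC
  · rw [measure_le_sum_eq_zero_of_sum_sq_eq_zero (fun r ↦ (hbdd r).mono fun _ h ↦ h.2) hC.symm
      (by positivity)]
    exact zero_le
  have hmean : ∑ r, μ[L r] ≤ d := by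
    rwa [← integral_finsetSum _ fun r _ ↦ Integrable.of_mem_Icc 0 (m r * nE r)
      (hmeas r).aemeasurable (hbdd r)]
  have hCle : C ≤ (ε * d) ^ 2 * Δ :=
    sum_mul_sq_le_sq_mul_sum_sq (fun r _ ↦ (hm r).1.le) fun r _ ↦ (hm r).2
  calc μ {ω | (1 + ε * √(2 * log n * Δ)) * d ≤ ∑ r, L r ω}
      ≤ μ {ω | t ≤ ∑ r, (L r ω - μ[L r])} := by
        refine measure_mono fun ω hω ↦ ?_
        simp only [Set.mem_ofPred_eq, Finset.sum_sub_distrib, hthreshold] at hω ⊢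
        linarith
    _ ≤ ENNReal.ofReal (exp (-2 * t ^ 2 / C)) := by
        simpa using measure_sum_sub_integral_ge_le_of_mem_Icc (fun r ↦ (hmeas r).aemeasurable)
          hindep hbdd (by positivity)
    _ ≤ ENNReal.ofReal (n ^ (-4 : ℝ)) := by
        have hlog : 0 ≤ log n := log_nonneg hn
        rw [rpow_def_of_pos (by linarith)]
        gcongr
        rw [div_le_iff₀ hC, mul_pow, mul_pow, sq_sqrt (by positivity)]
        nlinarith [mul_le_mul_of_nonneg_left hCle hlog]

/-- Sharpened edge capacity violation bound under the stronger demand assumption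
`m r ≤ ε * d` with `0 < ε < 1`: the probability of exceeding
`(1 + ε √(2 (log n) Δ_E)) d` is at most `n⁻⁴`. -/
theorem edge_capacity_violation_eps {Ω : Type*} [MeasurableSpace Ω] (μ : Measure Ω)
    [IsProbabilityMeasure μ]
    {R : Type*} [Fintype R] (L : R → Ω → ℝ) (m : R → ℝ) (nE : R → ℕ) (d ε : ℝ)
    (hmeas : ∀ r, Measurable (L r))
    (hindep : iIndepFun L μ)
    (hbdd : ∀ r, ∀ᵐ ω ∂μ, 0 ≤ L r ω ∧ L r ω ≤ m r * (nE r : ℝ))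
    (hd : 0 < d)
    (hε0 : 0 < ε) (hε1 : ε < 1)
    (hm : ∀ r, 0 < m r ∧ m r ≤ ε * d)
    (hE : ∫ ω, ∑ r, L r ω ∂μ ≤ d) :
    ∀ n : ℝ, 1 ≤ n →
      μ {ω | (1 + ε * Real.sqrt (2 * Real.log n * ∑ r, ((nE r : ℝ)) ^ 2)) * d ≤ ∑ r, L r ω}
        ≤ ENNReal.ofReal (n ^ (-4 : ℝ)) :=
  edge_capacity_violation_eps_general μ L m nE d ε hmeas hindep hbdd hd hε0 hm hE
end

section
/- Let R be a finite index set and, for each r ∈ R, let K_r be a finite index set and f_{r,·}, c_{r,·}, l_{r,·} : K_r → ℝ be functions with f_{r,k} ≥ 0, c_{r,k} ≥ 0, l_{r,k} ≥ 0 for all k, and ∑_{k∈K_r} f_{r,k} = 1. Let W_r := ∑_{k∈K_r} f_{r,k}·c_{r,k} and λ_r := ∑_{k ∈ K_r, c_{r,k} ≤ 2·W_r} f_{r,k}, and define the rescaled values f̂_{r,k} := f_{r,k}/λ_r if c_{r,k} ≤ 2·W_r and f̂_{r,k} := 0 otherwise. If d ≥ 0 and ∑_{r∈R} ∑_{k∈K_r}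 f_{r,k}·l_{r,k} ≤ d, then ∑_{r∈R} ∑_{k∈K_r} f̂_{r,k}·l_{r,k} ≤ 2·d. -/
/-! Markov's inequality shows that a probability vector puts mass at most `1/2` on the indices
whose cost exceeds twice the mean cost, so the normalising mass `λ_r` of the kept indices is at
least `1/2`. Rescaling by `1/λ_r` therefore at most doubles every weight, and hence the load. -/

open Finset

/-- The strict form of Markov's inequality is what handles mean cost `0`. -/
theorem mul_sum_lt_sum_mul_of_lt {ι : Type*} {t : Finset ι} {w x : ι → ℝ} {a : ℝ}
    (hw : ∀ j ∈ t, 0 ≤ w j) (hax : ∀ j ∈ t, a < x j) (hpos : 0 < ∑ j ∈ t, w j) :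
    a * ∑ j ∈ t, w j < ∑ j ∈ t, w j * x j := by
  obtain ⟨i, hi, hwi⟩ := exists_lt_of_sum_lt (by simpa using hpos : ∑ j ∈ t, (0 : ℝ) < _)
  rw [mul_sum]
  refine sum_lt_sum (fun j hj => ?_) ⟨i, hi, ?_⟩
  · rw [mul_comm]; exact mul_le_mul_of_nonneg_left (hax j hj).le (hw j hj)
  · rw [mul_comm]; exact mul_lt_mul_of_pos_left (hax i hi) hwi

theorem half_le_sum_filter_le_two_mul_mean {ι : Type*} [Fintype ι] {w x : ι → ℝ}
    (hw : ∀ j, 0 ≤ w j) (hx : ∀ j, 0 ≤ x j) (hsum : ∑ j, w j = 1) :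
    1 / 2 ≤ ∑ j ∈ univ.filter (fun j => x j ≤ 2 * ∑ i, w i * x i), w j := by
  set W := ∑ i, w i * x i
  set T := univ.filter (fun j => ¬ x j ≤ 2 * W)
  have hmass : ∑ j ∈ univ.filter (fun j => x j ≤ 2 * W), w j + ∑ j ∈ T, w j = 1 := by
    rw [sum_filter_add_sum_filter_not, hsum]
  have hcost_T : ∑ j ∈ T, w j * x j ≤ W :=
    (le_add_of_nonneg_left (sum_nonneg fun j _ => mul_nonneg (hw j) (hx j))).trans_eq
      (sum_filter_add_sum_filter_not univ (fun j => x j ≤ 2 * W) _)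
  by_contra! hsmall
  have hT : 1 / 2 < ∑ j ∈ T, w j := by linarith
  have hmarkov := mul_sum_lt_sum_mul_of_lt (t := T) (a := 2 * W) (fun j _ => hw j)
    (fun j hj => not_le.mp (mem_filter.mp hj).2) (by linarith)
  have hW : 0 ≤ W := sum_nonneg fun j _ => mul_nonneg (hw j) (hx j)
  nlinarith

theorem ite_div_le_two_mul {p : Prop} [Decidable p] {a μ : ℝ} (ha : 0 ≤ a) (hμ : 1 / 2 ≤ μ) :
    (if p then a / μ else 0) ≤ 2 * a := by
  split_ifs
  · rw [div_le_iff₀ (by linarith)]; nlinarith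
  · linarith

theorem rescaled_load_bound_general {R : Type*} [Fintype R] {K : R → Type*} [∀ r, Fintype (K r)]
    (f c l : ∀ r, K r → ℝ) (d : ℝ)
    (hf : ∀ r k, 0 ≤ f r k) (hc : ∀ r k, 0 ≤ c r k) (hl : ∀ r k, 0 ≤ l r k)
    (hsum : ∀ r, ∑ k, f r k = 1)
    (hload : ∑ r, ∑ k, f r k * l r k ≤ d) :
    ∑ r, ∑ k,
        (if c r k ≤ 2 * ∑ j, f r j * c r j then
          f r k / ∑ j ∈ Finset.univ.filter (fun j => c r j ≤ 2 * ∑ j', f r j' * c r j'), f r j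
        else 0) * l r k
      ≤ 2 * d := by
  calc _ ≤ ∑ r, ∑ k, 2 * f r k * l r k :=
        sum_le_sum fun r _ => sum_le_sum fun k _ => mul_le_mul_of_nonneg_right
          (ite_div_le_two_mul (hf r k)
            (half_le_sum_filter_le_two_mul_mean (hf r) (hc r) (hsum r))) (hl r k)
    _ = 2 * ∑ r, ∑ k, f r k * l r k := by simp only [mul_sum, mul_assoc]
    _ ≤ 2 * d := by linarith

/-- After discarding decompositions whose cost exceeds twice the weighted cost and
rescaling the remaining fractional embedding values, the cumulative fractional load on
any resource of capacity `d` is at most `2 d`. -/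
theorem rescaled_load_bound {R : Type*} [Fintype R] {K : R → Type*} [∀ r, Fintype (K r)]
    (f c l : ∀ r, K r → ℝ) (d : ℝ)
    (hf : ∀ r k, 0 ≤ f r k) (hc : ∀ r k, 0 ≤ c r k) (hl : ∀ r k, 0 ≤ l r k)
    (hsum : ∀ r, ∑ k, f r k = 1)
    (hd : 0 ≤ d)
    (hload : ∑ r, ∑ k, f r k * l r k ≤ d) :
    ∑ r, ∑ k,
        (if c r k ≤ 2 * ∑ j, f r j * c r j then
          f r k / ∑ j ∈ Finset.univ.filter (fun j => c r j ≤ 2 * ∑ j', f r j' * c r j'), f r j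
        else 0) * l r k
      ≤ 2 * d :=
  rescaled_load_bound_general f c l d hf hc hl hsum hload
end

section
/- Let G be a simple graph on a vertex set V satisfying the cactus property: for all vertices u, v and all closed walks c₁ : G.Walk u u and c₂ : G.Walk v v that are cycles (IsCycle), if the edge sets of c₁ and c₂ (as finite sets) are different, then the supports of c₁ and c₂ share at most one vertex. Then for all distinct vertices a ≠ b there do not exist three walks p₁, p₂, p₃ : G.Walk a b, each of which is a path (IsPath), with pairwise distinct edge sets, such that for each pair i ≠ j the intersection of the supports of p_i and p_j is contained in {a, b}. -/
/-!
Two internally disjoint $a$–$b$ paths with different edge sets close up to a cycle through $a$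
and $b$. Given three such paths $p_1, p_2, p_3$, the cycles $p_1 p_2^{-1}$ and $p_1 p_3^{-1}$
have different edge sets, because $p_2$ and $p_3$ are edge-disjoint from $p_1$, yet both contain
$a$ and $b$, contradicting the cactus property.
-/

namespace SimpleGraph.Walk

variable {V : Type*} {G : SimpleGraph V} {u v : V}

lemma IsPath.start_notMem_support_tail {p : G.Walk u v} (hp : p.IsPath) :
    u ∉ p.support.tail :=
  (List.nodup_cons.mp (p.cons_tail_support ▸ hp.support_nodup)).1

lemma edges_eq_of_length_eq_one : ∀ {p : G.Walk u v}, p.length = 1 → p.edges = [s(u, v)]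
  | cons _ nil, _ => rfl

lemma one_lt_length_or_of_edges_ne {p q : G.Walk u v} (huv : u ≠ v) (hne : p.edges ≠ q.edges) :
    1 < p.length ∨ 1 < q.length := by
  by_contra! hle
  have hp : p.length = 1 := by
    have : p.length ≠ 0 := mt eq_of_length_eq_zero huv
    omega
  have hq : q.length = 1 := by
    have : q.length ≠ 0 := mt eq_of_length_eq_zero huv
    omega
  exact hne (by rw [edges_eq_of_length_eq_one hp, edges_eq_of_length_eq_one hq])

variable [DecidableEq V]

lemma IsPath.disjoint_support_tail_reverse {p q : G.Walk u v} (hp : p.IsPath) (hq : q.IsPath)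
    (hpq : ↑(p.support.toFinset ∩ q.support.toFinset) ⊆ ({u, v} : Set V)) :
    p.support.tail.Disjoint q.reverse.support.tail := by
  intro x hxp hxq
  have hx : x ∈ p.support.toFinset ∩ q.support.toFinset := by
    have := List.mem_of_mem_tail hxq
    simp_all [List.mem_of_mem_tail hxp]
  rcases hpq hx with rfl | rfl
  · exact hp.start_notMem_support_tail hxp
  · exact hq.reverse.start_notMem_support_tail hxq

lemma IsPath.isCycle_append_reverse {p q : G.Walk u v} (huv : u ≠ v) (hp : p.IsPath)
    (hq : q.IsPath) (hne : p.edges ≠ q.edges)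
    (hpq : ↑(p.support.toFinset ∩ q.support.toFinset) ⊆ ({u, v} : Set V)) :
    (p.append q.reverse).IsCycle :=
  hp.isCycle_append hq.reverse (hp.disjoint_support_tail_reverse hq hpq)
    (by simpa using one_lt_length_or_of_edges_ne huv hne)

lemma IsTrail.disjoint_edges_of_append_reverse {p q : G.Walk u v}
    (h : (p.append q.reverse).IsTrail) : Disjoint p.edges.toFinset q.edges.toFinset := by
  rw [List.disjoint_toFinset_iff_disjoint]
  simpa using ((isTrail_append _ _).mp h).2.2

lemma edges_toFinset_append_reverse (p q : G.Walk u v) :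
    (p.append q.reverse).edges.toFinset = p.edges.toFinset ∪ q.edges.toFinset := by
  simp [List.toFinset_append]

end SimpleGraph.Walk

open SimpleGraph Walk Finset

/-- In a cactus graph (any two distinct simple cycles share at most one vertex),
no two distinct vertices are joined by three pairwise edge-distinct, internally
vertex-disjoint paths. -/
theorem cactus_no_three_disjoint_paths {V : Type*} [DecidableEq V] (G : SimpleGraph V)
    (hcactus : ∀ (u v : V) (c₁ : G.Walk u u) (c₂ : G.Walk v v),
      c₁.IsCycle → c₂.IsCycle → c₁.edges.toFinset ≠ c₂.edges.toFinset →
      (c₁.support.toFinset ∩ c₂.support.toFinset).card ≤ 1) :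
    ∀ a b : V, a ≠ b →
      ¬ ∃ (p₁ p₂ p₃ : G.Walk a b),
          p₁.IsPath ∧ p₂.IsPath ∧ p₃.IsPath ∧
          p₁.edges.toFinset ≠ p₂.edges.toFinset ∧
          p₁.edges.toFinset ≠ p₃.edges.toFinset ∧
          p₂.edges.toFinset ≠ p₃.edges.toFinset ∧
          ↑(p₁.support.toFinset ∩ p₂.support.toFinset) ⊆ ({a, b} : Set V) ∧
          ↑(p₁.support.toFinset ∩ p₃.support.toFinset) ⊆ ({a, b} : Set V) ∧
          ↑(p₂.support.toFinset ∩ p₃.support.toFinset) ⊆ ({a, b} : Set V) := by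
  rintro a b hab ⟨p₁, p₂, p₃, h₁, h₂, h₃, e₁₂, e₁₃, e₂₃, d₁₂, d₁₃, -⟩
  have c₁₂ := h₁.isCycle_append_reverse hab h₂ (ne_of_apply_ne _ e₁₂) d₁₂
  have c₁₃ := h₁.isCycle_append_reverse hab h₃ (ne_of_apply_ne _ e₁₃) d₁₃
  have hedges : (p₁.append p₂.reverse).edges.toFinset ≠ (p₁.append p₃.reverse).edges.toFinset := by
    intro h
    rw [edges_toFinset_append_reverse, edges_toFinset_append_reverse] at h
    have := congrArg (· \ p₁.edges.toFinset) h
    simp only [union_sdiff_cancel_left c₁₂.isTrail.disjoint_edges_of_append_reverse,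
      union_sdiff_cancel_left c₁₃.isTrail.disjoint_edges_of_append_reverse] at this
    exact e₂₃ this
  have hab_support : {a, b} ⊆ (p₁.append p₂.reverse).support.toFinset ∩
      (p₁.append p₃.reverse).support.toFinset := by
    simp [insert_subset_iff, mem_support_append_iff]
  have := hcactus a a _ _ c₁₂ c₁₃ hedges
  have := card_le_card hab_support
  rw [card_pair hab] at this
  omega
end
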